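/- (Addition formula.) For every real q with 0 < q < 1, integers α ≥ 1 and n ≥ 0, and every real x ≥ 0, Ẽ_{n,q}(x|α) = Σ_{k=0}^{n} C(n,k) q^{α k x} Ẽ_{k,q}(α) [x:q^α]^{n−k}. -/

import Mathlib

open scoped BigOperators

/-- `[x:q] = (q^x - 1)/(q - 1)` with real exponentiation. -/
noncomputable def qNum (q x : ℝ) : ℝ := (q ^ x - 1) / (q - 1)

/-- Weighted `q`-Euler polynomial `Ẽ_{n,q}(x|α) = [2:q] ∑_{m≥0} (-1)^m q^m [m+x:q^α]^n`. -/
noncomputable def qEuler (q : ℝ) (α n : ℕ) (x : ℝ) : ℝ :=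
  qNum q 2 * ∑' m : ℕ, (-1 : ℝ) ^ m * q ^ m * (qNum (q ^ α) ((m : ℝ) + x)) ^ n

open Finset

/-! Since `[m+x:Q] = Q^x [m:Q] + [x:Q]` with `Q = q^α`, expanding the `n`-th power binomially and
summing term by term turns each `[m:Q]^k`-series into the weighted `q`-Euler number `Ẽ_{k,q}(α)`.
The interchange of the series with the finite binomial sum is legitimate because `[m:Q]` stays
below `1/(1-Q)`, so every series is dominated by the geometric series `∑ q^m`. -/

lemma qNum_add {Q : ℝ} (hQ : 0 < Q) (y x : ℝ) :
    qNum Q (y + x) = Q ^ x * qNum Q y + qNum Q x := by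
  simp only [qNum, Real.rpow_add hQ]
  ring

lemma abs_qNum_natCast_le {Q : ℝ} (hQ0 : 0 < Q) (hQ1 : Q < 1) (m : ℕ) :
    |qNum Q m| ≤ 1 / (1 - Q) := by
  have hpow : Q ^ (m : ℝ) = Q ^ m := Real.rpow_natCast Q m
  have hpow_le : Q ^ m ≤ 1 := pow_le_one₀ hQ0.le hQ1.le
  have hpow_nonneg : 0 ≤ Q ^ m := pow_nonneg hQ0.le m
  rw [qNum, hpow, abs_div, abs_of_nonpos (by linarith), abs_of_nonpos (by linarith),
    div_le_div_iff₀ (by linarith) (by linarith)]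
  nlinarith

lemma summable_alternating_mul_qNum_pow {q Q : ℝ} (hq0 : 0 ≤ q) (hq1 : q < 1)
    (hQ0 : 0 < Q) (hQ1 : Q < 1) (k : ℕ) :
    Summable fun m : ℕ => (-1 : ℝ) ^ m * q ^ m * qNum Q m ^ k := by
  refine Summable.of_norm_bounded ((summable_geometric_of_lt_one hq0 hq1).mul_left
    ((1 / (1 - Q)) ^ k)) fun m => ?_
  rw [norm_mul, norm_mul, norm_pow, norm_pow, norm_neg, norm_one, one_pow, one_mul,
    Real.norm_eq_abs, Real.norm_eq_abs, abs_of_nonneg hq0, mul_comm, abs_pow]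
  gcongr
  exact abs_qNum_natCast_le hQ0 hQ1 m

lemma tsum_mul_add_pow {w f : ℕ → ℝ} (a b : ℝ) (n : ℕ)
    (hs : ∀ k, Summable fun m => w m * f m ^ k) :
    ∑' m, w m * (a * f m + b) ^ n =
      ∑ k ∈ range (n + 1), (n.choose k : ℝ) * a ^ k * (∑' m, w m * f m ^ k) * b ^ (n - k) := by
  have hterm : ∀ m, w m * (a * f m + b) ^ n =
      ∑ k ∈ range (n + 1), (n.choose k : ℝ) * a ^ k * b ^ (n - k) * (w m * f m ^ k) := by
    intro m
    rw [add_pow, mul_sum]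
    refine sum_congr rfl fun k _ => ?_
    ring
  simp_rw [hterm]
  rw [Summable.tsum_finsetSum fun k _ => (hs k).mul_left _]
  refine sum_congr rfl fun k _ => ?_
  rw [tsum_mul_left]
  ring

lemma qEuler_zero (q : ℝ) (α k : ℕ) :
    qEuler q α k 0 = qNum q 2 * ∑' m : ℕ, (-1 : ℝ) ^ m * q ^ m * qNum (q ^ α) m ^ k := by
  simp only [qEuler, add_zero]

theorem statement3_general (q : ℝ) (hq0 : 0 < q) (hq1 : q < 1)
    (α : ℕ) (hα : 1 ≤ α) (n : ℕ) (x : ℝ) :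
    qEuler q α n x =
      ∑ k ∈ Finset.range (n + 1),
        (n.choose k : ℝ) * q ^ ((↑(α * k) : ℝ) * x) * qEuler q α k 0 *
          (qNum (q ^ α) x) ^ (n - k) := by
  have hQ0 : 0 < q ^ α := pow_pos hq0 α
  have hQ1 : q ^ α < 1 := pow_lt_one₀ hq0.le hq1 (by omega)
  have hscale : ∀ k : ℕ, ((q ^ α) ^ x) ^ k = q ^ ((↑(α * k) : ℝ) * x) := fun k => by
    rw [← Real.rpow_natCast q α, ← Real.rpow_mul hq0.le, ← Real.rpow_natCast _ k,
      ← Real.rpow_mul hq0.le]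
    push_cast
    ring_nf
  simp_rw [qEuler_zero]
  rw [qEuler]
  simp_rw [qNum_add hQ0]
  rw [tsum_mul_add_pow _ _ n fun k =>
      summable_alternating_mul_qNum_pow hq0.le hq1 hQ0 hQ1 k, mul_sum]
  refine sum_congr rfl fun k _ => ?_
  rw [← hscale k]
  ring

theorem statement3 (q : ℝ) (hq0 : 0 < q) (hq1 : q < 1)
    (α : ℕ) (hα : 1 ≤ α) (n : ℕ) (x : ℝ) (hx : 0 ≤ x) :
    qEuler q α n x =
      ∑ k ∈ Finset.range (n + 1),
        (n.choose k : ℝ) * q ^ ((↑(α * k) : ℝ) * x) * qEuler q α k 0 *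
          (qNum (q ^ α) x) ^ (n - k) :=
  statement3_general q hq0 hq1 α hα n x
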